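/- Let n ≥ 4 be an integer. The following two identities hold in F (type D_n evaluations G_{n,0} and G_{n,1}): (i) Σ_{a ∈ I_n} P_{n,a} = Σ_{i=1}^{n} (q^{2(n−i)} + q^{−2(n−i)}); (ii) Σ_{a ∈ I_n} L_a·P_{n,a} = q^{2n−2}·Σ_{i=1}^{n} (L_i + L_i^{−1}). -/

import Mathlib

set_option maxHeartbeats 1000000
set_option synthInstance.maxHeartbeats 400000
section lag
open Polynomial Finset
variable {F ι : Type*} [Field F] [DecidableEq ι]

theorem lagA (s : Finset ι) (v : ι → F) (hvs : Set.InjOn v s) (f : F[X])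
    (hf : f.degree < s.card) :
    ∑ i ∈ s, f.eval (v i) / ∏ j ∈ s.erase i, (v i - v j) = f.coeff (s.card - 1) := by
  rcases s.eq_empty_or_nonempty with rfl | hs
  · simp at hf ⊢
    simp [Polynomial.degree_eq_bot.mp (by simpa using hf)]
  have key := Lagrange.eq_interpolate hvs hf
  have hc : f.coeff (s.card - 1)
      = (Lagrange.interpolate s v fun i => f.eval (v i)).coeff (s.card - 1) := by
    rw [← key]
  rw [hc, Lagrange.interpolate_apply, Polynomial.finset_sum_coeff]
  refine Finset.sum_congr rfl fun i hi => ?_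
  have hb : (Lagrange.basis s v i).coeff (s.card - 1)
      = (∏ j ∈ s.erase i, (v i - v j))⁻¹ := by
    have hdeg := Lagrange.natDegree_basis hvs hi
    have hlc : (Lagrange.basis s v i).leadingCoeff = (∏ j ∈ s.erase i, (v i - v j))⁻¹ := by
      rw [Lagrange.basis, Polynomial.leadingCoeff_prod, ← Finset.prod_inv_distrib]
      refine Finset.prod_congr rfl fun j hj => ?_
      rcases Finset.mem_erase.mp hj with ⟨hij, hj'⟩
      have hne : v i - v j ≠ 0 := sub_ne_zero_of_ne fun h => hij (hvs hj' hi h.symm)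
      simp [Lagrange.basisDivisor, Polynomial.leadingCoeff_mul, Polynomial.leadingCoeff_C,
        (Polynomial.monic_X_sub_C (v j)).leadingCoeff]
    rw [← hdeg, Polynomial.coeff_natDegree, hlc]
  rw [Polynomial.coeff_C_mul, hb, div_eq_mul_inv]

theorem lagB (s : Finset ι) (hs : s.Nonempty) (v : ι → F) (hvs : Set.InjOn v s) (f : F[X])
    (hf : f.degree ≤ s.card) :
    ∑ i ∈ s, f.eval (v i) / ∏ j ∈ s.erase i, (v i - v j)
      = f.coeff (s.card - 1) + f.coeff s.card * ∑ i ∈ s, v i := by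
  set p : F[X] := ∏ i ∈ s, (X - C (v i)) with hp
  have hpm : p.Monic := monic_prod_of_monic _ _ fun i _ => monic_X_sub_C _
  have hpd : p.natDegree = s.card := by
    rw [hp, natDegree_prod _ _ fun i _ => X_sub_C_ne_zero (v i)]
    simp
  set g : F[X] := f - C (f.coeff s.card) * p with hg
  have hgd : g.degree < s.card := by
    rw [degree_lt_iff_coeff_zero]
    intro m hm
    rw [hg, coeff_sub, coeff_C_mul]
    rcases eq_or_lt_of_le hm with rfl | hm'
    · rw [← hpd, hpm.coeff_natDegree, mul_one, sub_self]
    · have h1 : f.coeff m = 0 := coeff_eq_zero_of_degree_lt (lt_of_le_of_lt hf (by exact_mod_cast hm'))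
      have h2 : p.coeff m = 0 := coeff_eq_zero_of_degree_lt (by
        rw [Polynomial.degree_eq_natDegree hpm.ne_zero, hpd]; exact_mod_cast hm')
      rw [h1, h2, mul_zero, sub_zero]
  have hev : ∀ i ∈ s, g.eval (v i) = f.eval (v i) := by
    intro i hi
    have : p.eval (v i) = 0 := by
      rw [hp, eval_prod]
      exact Finset.prod_eq_zero hi (by simp)
    simp [hg, this]
  have := lagA s v hvs g hgd
  rw [Finset.sum_congr rfl fun i hi => by rw [hev i hi]] at this
  rw [this, hg, coeff_sub, coeff_C_mul]
  have hpc : p.coeff (s.card - 1) = -∑ i ∈ s, v i := by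
    have hnc : p.nextCoeff = ∑ i ∈ s, -(v i) := by
      rw [hp, Monic.nextCoeff_prod _ _ fun i _ => monic_X_sub_C _]
      exact Finset.sum_congr rfl fun i _ => nextCoeff_X_sub_C _
    have hcard : s.card ≠ 0 := Finset.card_ne_zero_of_mem hs.choose_spec
    rw [nextCoeff_of_natDegree_pos (by rw [hpd]; omega), hpd] at hnc
    rw [hnc, Finset.sum_neg_distrib]
  rw [hpc]
  ring

section poly2
open Polynomial
variable (s : Finset ι) (w : ι → F) (t : F)

noncomputable def fpol : F[X] := (∏ b ∈ s, (C t * X - C (w b))) * (X ^ 2 - 1)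

lemma fpol_eval (x : F) : (fpol s w t).eval x = (∏ b ∈ s, (t * x - w b)) * (x ^ 2 - 1) := by
  simp [fpol, eval_prod]

variable {t} (ht : t ≠ 0)
include ht

lemma prod_lin_eq : (∏ b ∈ s, (C t * X - C (w b)))
    = C (t ^ s.card) * ∏ b ∈ s, (X - C (w b * t⁻¹)) := by
  have h1 : ∀ b ∈ s, C t * X - C (w b) = C t * (X - C (w b * t⁻¹)) := by
    intro b _
    rw [mul_sub, ← C_mul]
    congr 2
    field_simp
  rw [Finset.prod_congr rfl h1, Finset.prod_mul_distrib, Finset.prod_const, C_pow]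

lemma prod_lin_natDegree : (∏ b ∈ s, (C t * X - C (w b))).natDegree = s.card := by
  rw [prod_lin_eq s w ht, natDegree_C_mul (pow_ne_zero _ ht),
    natDegree_prod _ _ (fun b _ => X_sub_C_ne_zero _),
    Finset.sum_congr rfl fun b _ => natDegree_X_sub_C (w b * t⁻¹)]
  simp

lemma prod_lin_ne_zero : (∏ b ∈ s, (C t * X - C (w b))) ≠ 0 := by
  rw [prod_lin_eq s w ht]
  exact mul_ne_zero (C_ne_zero.mpr (pow_ne_zero _ ht))
    (Finset.prod_ne_zero_iff.mpr fun b _ => X_sub_C_ne_zero _)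

lemma prod_lin_coeff_top : (∏ b ∈ s, (C t * X - C (w b))).coeff s.card = t ^ s.card := by
  rw [prod_lin_eq s w ht, coeff_C_mul]
  have hM : (∏ b ∈ s, (X - C (w b * t⁻¹))).Monic :=
    monic_prod_of_monic _ _ fun b _ => monic_X_sub_C _
  have hd : (∏ b ∈ s, (X - C (w b * t⁻¹))).natDegree = s.card := by
    rw [natDegree_prod _ _ (fun b _ => X_sub_C_ne_zero _),
      Finset.sum_congr rfl fun b _ => natDegree_X_sub_C (w b * t⁻¹)]; simp
  rw [← hd, hM.coeff_natDegree, mul_one]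

lemma prod_lin_coeff_next (hs : s.Nonempty) :
    (∏ b ∈ s, (C t * X - C (w b))).coeff (s.card - 1) = -t ^ (s.card - 1) * ∑ b ∈ s, w b := by
  rw [prod_lin_eq s w ht, coeff_C_mul]
  have hM : (∏ b ∈ s, (X - C (w b * t⁻¹))).Monic :=
    monic_prod_of_monic _ _ fun b _ => monic_X_sub_C _
  have hd : (∏ b ∈ s, (X - C (w b * t⁻¹))).natDegree = s.card := by
    rw [natDegree_prod _ _ (fun b _ => X_sub_C_ne_zero _),
      Finset.sum_congr rfl fun b _ => natDegree_X_sub_C (w b * t⁻¹)]; simp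
  have hcard : s.card ≠ 0 := Finset.card_ne_zero_of_mem hs.choose_spec
  have hnc : (∏ b ∈ s, (X - C (w b * t⁻¹))).nextCoeff = -∑ b ∈ s, w b * t⁻¹ := by
    rw [Monic.nextCoeff_prod _ _ fun b _ => monic_X_sub_C _]
    rw [Finset.sum_congr rfl fun b _ => nextCoeff_X_sub_C _, Finset.sum_neg_distrib]
  rw [nextCoeff_of_natDegree_pos (by omega : 0 < _)] at hnc
  rw [hd] at hnc
  rw [hnc, ← Finset.sum_mul]
  have : t ^ s.card = t ^ (s.card - 1) * t := by
    rw [← pow_succ]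
    congr 1
    omega
  field_simp [this]
  rw [this]; ring

lemma fpol_ne_zero : fpol s w t ≠ 0 := by
  refine mul_ne_zero (prod_lin_ne_zero s w ht) ?_
  intro h
  have := congrArg (fun p => Polynomial.coeff p 2) h
  simp [coeff_one] at this

lemma fpol_natDegree : (fpol s w t).natDegree = s.card + 2 := by
  rw [fpol, natDegree_mul (prod_lin_ne_zero s w ht) (by
    intro h
    have := congrArg (fun p => Polynomial.coeff p 2) h
    simp [coeff_one] at this), prod_lin_natDegree s w ht]
  congr 1
  have : (X ^ 2 - 1 : F[X]) = X ^ 2 - C 1 := by rw [C_1]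
  rw [this, natDegree_X_pow_sub_C]

lemma fpol_degree : (fpol s w t).degree = (s.card + 2 : ℕ) := by
  rw [degree_eq_natDegree (fpol_ne_zero s w ht), fpol_natDegree s w ht]

lemma fpol_coeff_top : (fpol s w t).coeff (s.card + 2) = t ^ s.card := by
  rw [fpol, mul_sub, mul_one, coeff_sub, ← prod_lin_coeff_top s w ht]
  rw [coeff_mul_X_pow]
  have h0 : (∏ b ∈ s, (C t * X - C (w b))).coeff (s.card + 2) = 0 :=
    coeff_eq_zero_of_natDegree_lt (by rw [prod_lin_natDegree s w ht]; omega)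
  rw [h0, sub_zero]

lemma fpol_coeff_next (hs : s.Nonempty) :
    (fpol s w t).coeff (s.card + 1) = -t ^ (s.card - 1) * ∑ b ∈ s, w b := by
  have hcard : s.card ≠ 0 := Finset.card_ne_zero_of_mem hs.choose_spec
  rw [fpol, mul_sub, mul_one, coeff_sub]
  have h1 : s.card + 1 = (s.card - 1) + 2 := by omega
  rw [h1, coeff_mul_X_pow]
  have h0 : (∏ b ∈ s, (C t * X - C (w b))).coeff (s.card - 1 + 2) = 0 :=
    coeff_eq_zero_of_natDegree_lt (by rw [prod_lin_natDegree s w ht]; omega)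
  rw [h0, sub_zero, prod_lin_coeff_next s w ht hs]

end poly2


lemma prod_cancel₁ (A X c P : F) (hc : c ≠ 0) (hP : P ≠ 0) :
    (A * P) * X / (c * P) = A * X / c := by
  rw [div_eq_div_iff (mul_ne_zero hc hP) hc]
  ring

lemma prod_cancel₂ (A X c₁ c₂ P : F) (hc₁ : c₁ ≠ 0) (hc₂ : c₂ ≠ 0) (hP : P ≠ 0) :
    (A * P) * X / (c₁ * (c₂ * P)) = A * X / (c₁ * c₂) := by
  rw [div_eq_div_iff (mul_ne_zero hc₁ (mul_ne_zero hc₂ hP)) (mul_ne_zero hc₁ hc₂)]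
  ring

lemma scalar2 (u q N D : F) (hu : u ≠ 0) (hq : q ≠ 0) (hD : D ≠ 0)
    (h1 : u - u⁻¹ ≠ 0) (h2 : u - q⁻¹ ≠ 0) (h3 : u - -q⁻¹ ≠ 0) (k : ℕ) :
    (q^2*u - u) * ((q^2*u - u⁻¹) * N) * (u^2 - 1)
      / ((u - q⁻¹) * ((u - -q⁻¹) * ((u - u⁻¹) * D)))
    = q^2*(q^2-1)*q^k * (u * ((q⁻¹)^k * N / D)) := by
  have hqk : q^k * (q⁻¹)^k = 1 := by
    rw [← mul_pow, mul_inv_cancel₀ hq, one_pow]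
  have hrhs : q^2*(q^2-1)*q^k * (u * ((q⁻¹)^k * N / D)) = (q^2*(q^2-1)*u*N) / D := by
    rw [mul_div_assoc', mul_div_assoc', eq_div_iff hD, div_mul_eq_mul_div, div_eq_iff hD]
    linear_combination (q^2*(q^2-1)*u*N*D) * hqk
  rw [hrhs, div_eq_div_iff (mul_ne_zero h2 (mul_ne_zero h3 (mul_ne_zero h1 hD))) hD]
  field_simp
  ring

lemma scalar1 (u q N D : F) (hu : u ≠ 0) (hq : q ≠ 0) (hD : D ≠ 0)
    (h1 : u - u⁻¹ ≠ 0) (h2 : u - q⁻¹ ≠ 0) (h3 : u - -q⁻¹ ≠ 0) (k : ℕ) :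
    (q^2*u - u) * ((q^2*u - u⁻¹) * N) * (u^2 - 1)
      / ((u - 0) * ((u - q⁻¹) * ((u - -q⁻¹) * ((u - u⁻¹) * D))))
    = q^2*(q^2-1)*q^k * ((q⁻¹)^k * N / D) := by
  have hqk : q^k * (q⁻¹)^k = 1 := by
    rw [← mul_pow, mul_inv_cancel₀ hq, one_pow]
  have hrhs : q^2*(q^2-1)*q^k * ((q⁻¹)^k * N / D) = (q^2*(q^2-1)*N) / D := by
    rw [mul_div_assoc', eq_div_iff hD, div_mul_eq_mul_div, div_eq_iff hD]
    linear_combination (q^2*(q^2-1)*N*D) * hqk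
  rw [hrhs, div_eq_div_iff (mul_ne_zero (by simpa using hu) (mul_ne_zero h2 (mul_ne_zero h3 (mul_ne_zero h1 hD)))) hD]
  field_simp
  ring

end lag

noncomputable section

abbrev KK : Type := RatFunc ℚ
abbrev RR : Type := MvPolynomial ℕ KK
abbrev FF : Type := FractionRing RR

/-- the indeterminate `q`, viewed in `F` -/
def qF : FF := algebraMap RR FF (MvPolynomial.C RatFunc.X)

/-- `L_a` for `a ∈ ℤ`: `L_a` an indeterminate for `a > 0`, and `L_a = L_{-a}⁻¹` for `a < 0`. -/
def LF (a : ℤ) : FF :=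
  if a = 0 then 1
  else if 0 < a then algebraMap RR FF (MvPolynomial.X a.toNat)
  else (algebraMap RR FF (MvPolynomial.X (-a).toNat))⁻¹

/-- the index set `I_n = {-n, …, -1, 1, …, n}` -/
def In (n : ℕ) : Finset ℤ := (Finset.Icc (-(n : ℤ)) (n : ℤ)).erase 0

/-- `P_{n,a} = ∏_{b ∈ I_n, b ≠ ±a} (q L_a - q⁻¹ L_b)/(L_a - L_b)` -/
def Pna (n : ℕ) (a : ℤ) : FF :=
  ∏ b ∈ ((In n).erase a).erase (-a), (qF * LF a - qF⁻¹ * LF b) / (LF a - LF b)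


-- basics
lemma algInj : Function.Injective (algebraMap RR FF) := IsFractionRing.injective RR FF

def cKh : KK →+* FF := (algebraMap RR FF : RR →+* FF).comp (MvPolynomial.C)

lemma cKh_inj : Function.Injective cKh := cKh.injective

lemma qF_eq : qF = cKh RatFunc.X := rfl

lemma ratX_sq_ne_one : (RatFunc.X : KK) ^ 2 ≠ 1 := by
  intro h
  rw [← RatFunc.algebraMap_X, ← map_pow, ← map_one (algebraMap (Polynomial ℚ) KK)] at h
  have h2 := IsFractionRing.injective (Polynomial ℚ) KK h
  have := congrArg (Polynomial.coeff · 2) h2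
  simp [Polynomial.coeff_one] at this

lemma qF_ne_zero : qF ≠ 0 := by
  rw [qF_eq]
  intro h
  exact RatFunc.X_ne_zero (cKh_inj (by rw [h, map_zero]))

lemma qF_sq_ne_one : qF ^ 2 ≠ 1 := by
  rw [qF_eq, ← map_pow, ← map_one cKh]
  exact fun h => ratX_sq_ne_one (cKh_inj h)

lemma X_ne_C (i : ℕ) (r : KK) : (MvPolynomial.X i : RR) ≠ MvPolynomial.C r := by
  intro h
  have := congrArg (MvPolynomial.coeff (Finsupp.single i 1)) h
  rw [MvPolynomial.coeff_X, if_pos rfl, MvPolynomial.coeff_C,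
    if_neg (fun h => one_ne_zero (Finsupp.single_eq_zero.mp h.symm))] at this
  exact one_ne_zero this

lemma XX_ne_one (i j : ℕ) : (MvPolynomial.X i * MvPolynomial.X j : RR) ≠ 1 := by
  intro h
  have := congrArg MvPolynomial.constantCoeff h
  simp at this

lemma LF_zero : LF 0 = 1 := by simp [LF]

lemma algX_ne_zero (k : ℕ) : algebraMap RR FF (MvPolynomial.X k) ≠ 0 := by
  intro h
  apply X_ne_C k 0
  apply algInj
  rw [h, MvPolynomial.C_0, map_zero]

lemma XFXF_ne_one (j k : ℕ) :
    algebraMap RR FF (MvPolynomial.X j) * algebraMap RR FF (MvPolynomial.X k) ≠ 1 := by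
  intro h
  rw [← map_mul, ← map_one (algebraMap RR FF)] at h
  exact XX_ne_one j k (algInj h)

lemma LF_pos {i : ℤ} (h : 0 < i) : LF i = algebraMap RR FF (MvPolynomial.X i.toNat) := by
  simp [LF, h, h.ne']

lemma LF_neg (a : ℤ) : LF (-a) = (LF a)⁻¹ := by
  rcases lt_trichotomy a 0 with h | rfl | h
  · have : 0 < -a := by omega
    rw [LF_pos this]
    simp only [LF, h.ne, if_false, not_lt.mpr h.le]
    simp [h.ne, not_lt.mpr h.le]
  · simp [LF]
  · have h' : ¬ (0 < -a) := by omega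
    simp [LF, h, h.ne', h', (by omega : -a ≠ 0), inv_inv, not_lt.mpr h.le]

lemma LF_ne_zero (a : ℤ) : LF a ≠ 0 := by
  rcases lt_trichotomy a 0 with h | rfl | h
  · simp only [LF, h.ne, if_false, not_lt.mpr h.le]
    exact inv_ne_zero (algX_ne_zero _)
  · simp [LF]
  · rw [LF_pos h]
    exact algX_ne_zero _

lemma LF_mul_neg (a : ℤ) : LF a * LF (-a) = 1 := by
  rw [LF_neg, mul_inv_cancel₀ (LF_ne_zero a)]

lemma LF_ne_cK {a : ℤ} (ha : 0 < a) (r : KK) : LF a ≠ cKh r := by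
  rw [LF_pos ha]
  exact fun h => X_ne_C a.toNat r (algInj h)

lemma LF_ne_cK' {a : ℤ} (ha : a ≠ 0) (r : KK) : LF a ≠ cKh r := by
  rcases lt_or_gt_of_ne ha with h | h
  · intro heq
    have h1 : LF (-a) = (cKh r)⁻¹ := by rw [LF_neg, heq]
    rw [← map_inv₀ cKh] at h1
    exact LF_ne_cK (by omega) r⁻¹ h1
  · exact LF_ne_cK h r

lemma LF_ne_LF {a b : ℤ} (ha : a ≠ 0) (hb : b ≠ 0) (hab : a ≠ b) : LF a ≠ LF b := by
  rcases lt_or_gt_of_ne ha with h1 | h1 <;> rcases lt_or_gt_of_ne hb with h2 | h2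
  · -- both neg
    intro h
    have : LF (-a) = LF (-b) := by rw [LF_neg, LF_neg, h]
    rw [LF_pos (by omega), LF_pos (by omega)] at this
    exact (by omega : (-a).toNat ≠ (-b).toNat) (MvPolynomial.X_injective (algInj this))
  · -- a neg, b pos
    intro h
    have ha' : LF a = (LF (-a))⁻¹ := by rw [← LF_neg, neg_neg]
    have : LF (-a) * LF b = 1 := by
      rw [← h, ha', mul_inv_cancel₀ (LF_ne_zero _)]
    rw [LF_pos (by omega : (0:ℤ) < -a), LF_pos h2] at this
    exact XFXF_ne_one _ _ this
  · -- a pos, b neg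
    intro h
    have hb' : LF b = (LF (-b))⁻¹ := by rw [← LF_neg, neg_neg]
    have : LF (-b) * LF a = 1 := by
      rw [h, hb', mul_inv_cancel₀ (LF_ne_zero _)]
    rw [LF_pos (by omega : (0:ℤ) < -b), LF_pos h1] at this
    exact XFXF_ne_one _ _ this
  · intro h
    rw [LF_pos h1, LF_pos h2] at h
    exact (by omega : a.toNat ≠ b.toNat) (MvPolynomial.X_injective (algInj h))

lemma mem_In {n : ℕ} {a : ℤ} : a ∈ In n ↔ a ≠ 0 ∧ -(n:ℤ) ≤ a ∧ a ≤ n := by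
  simp [In, Finset.mem_erase, Finset.mem_Icc]

lemma In_eq_union (n : ℕ) :
    In n = Finset.Icc (1:ℤ) n ∪ (Finset.Icc (1:ℤ) n).image (fun i => -i) := by
  ext a
  simp only [mem_In, Finset.mem_union, Finset.mem_image, Finset.mem_Icc]
  constructor
  · rintro ⟨h0, h1, h2⟩
    rcases lt_or_gt_of_ne h0 with h | h
    · exact Or.inr ⟨-a, by omega, by omega⟩
    · exact Or.inl ⟨by omega, h2⟩
  · rintro (⟨h1, h2⟩ | ⟨b, ⟨h1, h2⟩, rfl⟩) <;> omega

lemma In_disj (n : ℕ) :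
    Disjoint (Finset.Icc (1:ℤ) n) ((Finset.Icc (1:ℤ) n).image (fun i => -i)) := by
  rw [Finset.disjoint_left]
  intro a ha hb
  simp only [Finset.mem_Icc] at ha
  simp only [Finset.mem_image, Finset.mem_Icc] at hb
  omega

lemma In_prod {M : Type*} [CommMonoid M] (n : ℕ) (g : ℤ → M) :
    ∏ b ∈ In n, g b = ∏ i ∈ Finset.Icc (1:ℤ) n, (g i * g (-i)) := by
  rw [In_eq_union, Finset.prod_union (In_disj n),
    Finset.prod_image (fun a _ b _ h => neg_injective h), ← Finset.prod_mul_distrib]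

lemma In_sum {M : Type*} [AddCommMonoid M] (n : ℕ) (g : ℤ → M) :
    ∑ b ∈ In n, g b = ∑ i ∈ Finset.Icc (1:ℤ) n, (g i + g (-i)) := by
  rw [In_eq_union, Finset.sum_union (In_disj n),
    Finset.sum_image (fun a _ b _ h => neg_injective h), ← Finset.sum_add_distrib]

lemma card_Icc_one (n : ℕ) : (Finset.Icc (1:ℤ) n).card = n := by
  rw [Int.card_Icc]
  omega

lemma card_In (n : ℕ) : (In n).card = 2 * n := by
  rw [In_eq_union, Finset.card_union_of_disjoint (In_disj n),
    Finset.card_image_of_injective _ neg_injective, card_Icc_one]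
  omega

lemma neg_mem_In {n : ℕ} {a : ℤ} (h : a ∈ In n) : -a ∈ In n := by
  rw [mem_In] at h ⊢; omega

lemma In_mono {n : ℕ} {a : ℤ} (h : a ∈ In n) : a ∈ In (n+1) := by
  rw [mem_In] at h ⊢; push_cast; omega

-- erase structure
lemma In_succ_erase_mem {n : ℕ} {a : ℤ} (ha : a ∈ In n) :
    (In (n+1)).erase a = insert ((n:ℤ)+1) (insert (-((n:ℤ)+1)) ((In n).erase a)) := by
  rw [mem_In] at ha
  ext b
  simp only [Finset.mem_erase, mem_In, Finset.mem_insert]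
  push_cast
  omega

lemma In_succ_erase_top (n : ℕ) :
    (In (n+1)).erase ((n:ℤ)+1) = insert (-((n:ℤ)+1)) (In n) := by
  ext b
  simp only [Finset.mem_erase, mem_In, Finset.mem_insert]
  push_cast
  omega

lemma In_succ_erase_bot (n : ℕ) :
    (In (n+1)).erase (-((n:ℤ)+1)) = insert ((n:ℤ)+1) (In n) := by
  ext b
  simp only [Finset.mem_erase, mem_In, Finset.mem_insert]
  push_cast
  omega

lemma card_erase_erase {n : ℕ} {a : ℤ} (ha : a ∈ In n) :
    (((In n).erase a).erase (-a)).card = 2 * n - 2 := by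
  have h1 : -a ∈ (In n).erase a := by
    rw [Finset.mem_erase]
    refine ⟨?_, neg_mem_In ha⟩
    rw [mem_In] at ha
    omega
  rw [Finset.card_erase_of_mem h1, Finset.card_erase_of_mem ha, card_In]
  omega


-- ===== application layer =====
open Polynomial in
noncomputable def fD (n : ℕ) : Polynomial FF := fpol (In n) LF (qF^2)

noncomputable def vD (n : ℕ) : ℤ → FF := fun a =>
  if a = (n:ℤ)+1 then qF⁻¹ else if a = -((n:ℤ)+1) then -qF⁻¹ else if a = 0 then 0 else LF a

lemma vD_In {n : ℕ} {a : ℤ} (ha : a ∈ In n) : vD n a = LF a := by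
  rw [mem_In] at ha
  simp only [vD, if_neg (by omega : ¬ a = (n:ℤ)+1), if_neg (by omega : ¬ a = -((n:ℤ)+1)),
    if_neg (by omega : ¬ a = 0)]

lemma vD_top (n : ℕ) : vD n ((n:ℤ)+1) = qF⁻¹ := by simp [vD]

lemma vD_bot (n : ℕ) : vD n (-((n:ℤ)+1)) = -qF⁻¹ := by
  have h1 : ¬(-((n:ℤ)+1) = (n:ℤ)+1) := by omega
  simp only [vD]
  rw [if_neg h1]
  simp

lemma vD_zero (n : ℕ) : vD n 0 = 0 := by
  have h1 : ¬((0:ℤ) = (n:ℤ)+1) := by omega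
  have h2 : ¬((0:ℤ) = -((n:ℤ)+1)) := by omega
  simp only [vD]
  rw [if_neg h1, if_neg h2]
  simp

lemma qinv_eq : qF⁻¹ = cKh (RatFunc.X⁻¹) := by rw [qF_eq, map_inv₀]

lemma neg_qinv_eq : -qF⁻¹ = cKh (-RatFunc.X⁻¹) := by rw [qinv_eq, map_neg]

lemma qinv_ne_zero : qF⁻¹ ≠ 0 := inv_ne_zero qF_ne_zero

lemma twoKK_ne_zero : (2 : KK) ≠ 0 := by
  intro h
  rw [← map_ofNat (algebraMap (Polynomial ℚ) KK) 2, ← map_zero (algebraMap (Polynomial ℚ) KK)] at h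
  have := IsFractionRing.injective (Polynomial ℚ) KK h
  norm_num at this

lemma qinv_ne_neg_qinv : qF⁻¹ ≠ -qF⁻¹ := by
  rw [neg_qinv_eq, qinv_eq]
  intro h
  have h2 := cKh_inj h
  have hx : (RatFunc.X : KK)⁻¹ ≠ 0 := inv_ne_zero RatFunc.X_ne_zero
  have h3 : (2 : KK) * RatFunc.X⁻¹ = 0 := by linear_combination h2
  rcases mul_eq_zero.mp h3 with h4 | h4
  · exact twoKK_ne_zero h4
  · exact hx h4

lemma LF_ne_qinv {a : ℤ} (ha : a ≠ 0) : LF a ≠ qF⁻¹ := by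
  rw [qinv_eq]; exact LF_ne_cK' ha _

lemma LF_ne_neg_qinv {a : ℤ} (ha : a ≠ 0) : LF a ≠ -qF⁻¹ := by
  rw [neg_qinv_eq]; exact LF_ne_cK' ha _

lemma sIcc_ok (n : ℕ) : Finset.Icc (-((n:ℤ)+1)) ((n:ℤ)+1) = insert 0 (In (n+1)) := by
  ext a
  simp only [Finset.mem_Icc, Finset.mem_insert, mem_In]
  push_cast
  omega

lemma In_succ_eq (n : ℕ) : In (n+1) = insert ((n:ℤ)+1) (insert (-((n:ℤ)+1)) (In n)) := by
  ext a
  simp only [mem_In, Finset.mem_insert]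
  push_cast
  omega

lemma hInj (n : ℕ) : Set.InjOn (vD n) (Finset.Icc (-((n:ℤ)+1)) ((n:ℤ)+1)) := by
  intro a ha b hb h
  simp only [Finset.mem_coe, Finset.mem_Icc] at ha hb
  by_contra hab
  unfold vD at h
  split_ifs at h with h1 h2 h3 h4 h5 h6 h7 h8 h9 h10 h11 h12 h13 h14 h15 h16 <;>
    first
      | omega
      | exact qinv_ne_neg_qinv h
      | exact qinv_ne_neg_qinv h.symm
      | exact qinv_ne_zero h
      | exact qinv_ne_zero h.symm
      | exact qinv_ne_zero (neg_eq_zero.mp h)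
      | exact qinv_ne_zero (neg_eq_zero.mp h.symm)
      | exact LF_ne_qinv (by omega) h
      | exact LF_ne_qinv (by omega) h.symm
      | exact LF_ne_neg_qinv (by omega) h
      | exact LF_ne_neg_qinv (by omega) h.symm
      | exact LF_ne_zero _ h
      | exact LF_ne_zero _ h.symm
      | exact LF_ne_LF (by omega) (by omega) hab h

lemma prodL_one (n : ℕ) : ∏ b ∈ In n, LF b = 1 := by
  rw [In_prod]
  exact Finset.prod_eq_one fun i _ => LF_mul_neg i

lemma pair_prod (n : ℕ) {c : FF} (hc : qF^2 * c^2 = 1) :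
    ∏ b ∈ In n, (qF^2 * c - LF b) = qF^(2*n) * ∏ b ∈ In n, (c - LF b) := by
  rw [In_prod, In_prod]
  have : qF^(2*n) = ∏ _i ∈ Finset.Icc (1:ℤ) n, qF^2 := by
    rw [Finset.prod_const, card_Icc_one, ← pow_mul]
  rw [this, ← Finset.prod_mul_distrib]
  refine Finset.prod_congr rfl fun i hi => ?_
  have hL : LF i * (LF i)⁻¹ = 1 := mul_inv_cancel₀ (LF_ne_zero i)
  rw [LF_neg]
  linear_combination (qF^2 - 1) * hc + (1 - qF^2) * hL

lemma prod_c_ne_zero (n : ℕ) {c : FF} (hc : ∀ a : ℤ, a ≠ 0 → LF a ≠ c) :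
    ∏ b ∈ In n, (c - LF b) ≠ 0 := by
  refine Finset.prod_ne_zero_iff.mpr fun b hb => ?_
  rw [mem_In] at hb
  exact fun h => hc b hb.1 (by linear_combination -h)


lemma neg_mem_erase {n : ℕ} {a : ℤ} (ha : a ∈ In n) : -a ∈ (In n).erase a := by
  rw [Finset.mem_erase]
  refine ⟨?_, neg_mem_In ha⟩
  rw [mem_In] at ha
  omega

lemma Pna_eq (n : ℕ) (a : ℤ) (ha : a ∈ In n) :
    Pna n a = (qF⁻¹)^(2*n-2) * (∏ b ∈ ((In n).erase a).erase (-a), (qF^2 * LF a - LF b))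
      / ∏ b ∈ ((In n).erase a).erase (-a), (LF a - LF b) := by
  rw [Pna, Finset.prod_div_distrib]
  congr 1
  have hfac : ∀ b ∈ ((In n).erase a).erase (-a),
      qF * LF a - qF⁻¹ * LF b = qF⁻¹ * (qF^2 * LF a - LF b) := by
    intro b _
    have hq := qF_ne_zero
    field_simp
  rw [Finset.prod_congr rfl hfac, Finset.prod_mul_distrib, Finset.prod_const,
    card_erase_erase ha]

lemma prodB_ne_zero {n : ℕ} {a : ℤ} (ha : a ∈ In n) :
    ∏ b ∈ ((In n).erase a).erase (-a), (LF a - LF b) ≠ 0 := by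
  refine Finset.prod_ne_zero_iff.mpr fun b hb => ?_
  have hb1 := Finset.mem_erase.mp hb
  have hb2 := Finset.mem_erase.mp hb1.2
  have hbIn := mem_In.mp hb2.2
  have haIn := mem_In.mp ha
  exact sub_ne_zero.mpr (LF_ne_LF haIn.1 hbIn.1 (by omega))

lemma LF_sub_inv_ne_zero {a : ℤ} (ha : a ≠ 0) : LF a - (LF a)⁻¹ ≠ 0 := by
  rw [← LF_neg]
  exact sub_ne_zero.mpr (LF_ne_LF ha (by omega) (by omega))

lemma termA2 (n : ℕ) {a : ℤ} (ha : a ∈ In n) :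
    (fD n).eval (vD n a) / ∏ b ∈ (In (n+1)).erase a, (vD n a - vD n b)
      = qF^2*(qF^2-1)*qF^(2*n-2) * (LF a * Pna n a) := by
  have hq := qF_ne_zero
  have ha0 : a ≠ 0 := (mem_In.mp ha).1
  have hu : LF a ≠ 0 := LF_ne_zero a
  have hmem2 : -a ∈ (In n).erase a := neg_mem_erase ha
  have hinner : ∏ b ∈ (In n).erase a, (LF a - vD n b)
      = (LF a - (LF a)⁻¹) * ∏ b ∈ ((In n).erase a).erase (-a), (LF a - LF b) := by
    rw [Finset.prod_congr rfl (fun b hb => by rw [vD_In (Finset.mem_of_mem_erase hb)]),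
      ← Finset.mul_prod_erase _ _ hmem2, LF_neg]
  have hden : ∏ b ∈ (In (n+1)).erase a, (vD n a - vD n b)
      = (LF a - qF⁻¹) * ((LF a - -qF⁻¹) * ((LF a - (LF a)⁻¹) *
          ∏ b ∈ ((In n).erase a).erase (-a), (LF a - LF b))) := by
    rw [In_succ_erase_mem ha,
      Finset.prod_insert (by rw [mem_In] at ha; simp only [Finset.mem_insert, Finset.mem_erase, mem_In]; omega),
      Finset.prod_insert (by rw [mem_In] at ha; simp only [Finset.mem_erase, mem_In]; omega),
      vD_In ha, vD_top, vD_bot, hinner]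
  have hnum : (fD n).eval (vD n a)
      = (qF^2*LF a - LF a) * ((qF^2*LF a - (LF a)⁻¹) *
          ∏ b ∈ ((In n).erase a).erase (-a), (qF^2*LF a - LF b)) * ((LF a)^2 - 1) := by
    rw [vD_In ha, fD, fpol_eval, ← Finset.mul_prod_erase _ _ ha,
      ← Finset.mul_prod_erase _ _ hmem2, LF_neg]
  rw [hnum, hden, Pna_eq n a ha]
  exact scalar2 (LF a) qF _ _ hu hq (prodB_ne_zero ha) (LF_sub_inv_ne_zero ha0)
    (sub_ne_zero.mpr (LF_ne_qinv ha0)) (sub_ne_zero.mpr (LF_ne_neg_qinv ha0)) (2*n-2)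

lemma sIcc_erase_mem {n : ℕ} {a : ℤ} (ha : a ∈ In (n+1)) :
    (Finset.Icc (-((n:ℤ)+1)) ((n:ℤ)+1)).erase a = insert 0 ((In (n+1)).erase a) := by
  rw [mem_In] at ha
  ext b
  simp only [Finset.mem_erase, Finset.mem_Icc, Finset.mem_insert, mem_In]
  push_cast at ha ⊢
  omega

lemma sIcc_erase_zero (n : ℕ) :
    (Finset.Icc (-((n:ℤ)+1)) ((n:ℤ)+1)).erase 0 = In (n+1) := by
  ext b
  simp only [Finset.mem_erase, Finset.mem_Icc, mem_In]
  push_cast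
  omega

lemma termA1 (n : ℕ) {a : ℤ} (ha : a ∈ In n) :
    (fD n).eval (vD n a) / ∏ b ∈ (Finset.Icc (-((n:ℤ)+1)) ((n:ℤ)+1)).erase a, (vD n a - vD n b)
      = qF^2*(qF^2-1)*qF^(2*n-2) * Pna n a := by
  have hq := qF_ne_zero
  have ha0 : a ≠ 0 := (mem_In.mp ha).1
  have hu : LF a ≠ 0 := LF_ne_zero a
  have hmem2 : -a ∈ (In n).erase a := neg_mem_erase ha
  have hinner : ∏ b ∈ (In n).erase a, (LF a - vD n b)
      = (LF a - (LF a)⁻¹) * ∏ b ∈ ((In n).erase a).erase (-a), (LF a - LF b) := by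
    rw [Finset.prod_congr rfl (fun b hb => by rw [vD_In (Finset.mem_of_mem_erase hb)]),
      ← Finset.mul_prod_erase _ _ hmem2, LF_neg]
  have hden : ∏ b ∈ (Finset.Icc (-((n:ℤ)+1)) ((n:ℤ)+1)).erase a, (vD n a - vD n b)
      = (LF a - 0) * ((LF a - qF⁻¹) * ((LF a - -qF⁻¹) * ((LF a - (LF a)⁻¹) *
          ∏ b ∈ ((In n).erase a).erase (-a), (LF a - LF b)))) := by
    rw [sIcc_erase_mem (In_mono ha),
      Finset.prod_insert (by simp only [Finset.mem_erase, mem_In]; omega),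
      In_succ_erase_mem ha,
      Finset.prod_insert (by rw [mem_In] at ha; simp only [Finset.mem_insert, Finset.mem_erase, mem_In]; omega),
      Finset.prod_insert (by rw [mem_In] at ha; simp only [Finset.mem_erase, mem_In]; omega),
      vD_In ha, vD_top, vD_bot, vD_zero, hinner]
  have hnum : (fD n).eval (vD n a)
      = (qF^2*LF a - LF a) * ((qF^2*LF a - (LF a)⁻¹) *
          ∏ b ∈ ((In n).erase a).erase (-a), (qF^2*LF a - LF b)) * ((LF a)^2 - 1) := by
    rw [vD_In ha, fD, fpol_eval, ← Finset.mul_prod_erase _ _ ha,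
      ← Finset.mul_prod_erase _ _ hmem2, LF_neg]
  rw [hnum, hden, Pna_eq n a ha]
  exact scalar1 (LF a) qF _ _ hu hq (prodB_ne_zero ha) (LF_sub_inv_ne_zero ha0)
    (sub_ne_zero.mpr (LF_ne_qinv ha0)) (sub_ne_zero.mpr (LF_ne_neg_qinv ha0)) (2*n-2)

lemma hc_top : qF^2 * (qF⁻¹)^2 = 1 := by
  have hq := qF_ne_zero
  field_simp

lemma hc_bot : qF^2 * (-qF⁻¹)^2 = 1 := by
  have hq := qF_ne_zero
  rw [neg_pow]
  field_simp

lemma twoFF_ne_zero : (2:FF) ≠ 0 := by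
  intro h
  rw [← map_ofNat cKh 2, ← map_zero cKh] at h
  exact twoKK_ne_zero (cKh_inj h)

lemma conv_qinv (n : ℕ) : ∏ b ∈ In n, (qF⁻¹ - vD n b) = ∏ b ∈ In n, (qF⁻¹ - LF b) :=
  Finset.prod_congr rfl fun b hb => by rw [vD_In hb]

lemma conv_neg_qinv (n : ℕ) : ∏ b ∈ In n, (-qF⁻¹ - vD n b) = ∏ b ∈ In n, (-qF⁻¹ - LF b) :=
  Finset.prod_congr rfl fun b hb => by rw [vD_In hb]

lemma prod_qinv_ne_zero (n : ℕ) : ∏ b ∈ In n, (qF⁻¹ - LF b) ≠ 0 :=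
  prod_c_ne_zero n fun a ha => LF_ne_qinv ha

lemma prod_neg_qinv_ne_zero (n : ℕ) : ∏ b ∈ In n, (-qF⁻¹ - LF b) ≠ 0 :=
  prod_c_ne_zero n fun a ha => LF_ne_neg_qinv ha

lemma termTop2 (n : ℕ) :
    (fD n).eval (vD n ((n:ℤ)+1))
        / ∏ b ∈ (In (n+1)).erase ((n:ℤ)+1), (vD n ((n:ℤ)+1) - vD n b)
      = qF^(2*n) * ((qF⁻¹)^2 - 1) / (qF⁻¹ - -qF⁻¹) := by
  rw [vD_top, fD, fpol_eval, pair_prod n hc_top, In_succ_erase_top,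
    Finset.prod_insert (by simp only [mem_In]; omega), vD_bot, conv_qinv]
  exact prod_cancel₁ _ _ _ _ (sub_ne_zero.mpr qinv_ne_neg_qinv) (prod_qinv_ne_zero n)

lemma termBot2 (n : ℕ) :
    (fD n).eval (vD n (-((n:ℤ)+1)))
        / ∏ b ∈ (In (n+1)).erase (-((n:ℤ)+1)), (vD n (-((n:ℤ)+1)) - vD n b)
      = qF^(2*n) * ((-qF⁻¹)^2 - 1) / (-qF⁻¹ - qF⁻¹) := by
  rw [vD_bot, fD, fpol_eval, pair_prod n hc_bot, In_succ_erase_bot,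
    Finset.prod_insert (by simp only [mem_In]; omega), vD_top, conv_neg_qinv]
  exact prod_cancel₁ _ _ _ _ (fun h => qinv_ne_neg_qinv (by linear_combination -h))
    (prod_neg_qinv_ne_zero n)

lemma sIcc_erase_top (n : ℕ) :
    (Finset.Icc (-((n:ℤ)+1)) ((n:ℤ)+1)).erase ((n:ℤ)+1)
      = insert 0 (insert (-((n:ℤ)+1)) (In n)) := by
  ext b
  simp only [Finset.mem_erase, Finset.mem_Icc, Finset.mem_insert, mem_In]
  omega

lemma sIcc_erase_bot (n : ℕ) :
    (Finset.Icc (-((n:ℤ)+1)) ((n:ℤ)+1)).erase (-((n:ℤ)+1))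
      = insert 0 (insert ((n:ℤ)+1) (In n)) := by
  ext b
  simp only [Finset.mem_erase, Finset.mem_Icc, Finset.mem_insert, mem_In]
  omega

lemma termTop1 (n : ℕ) :
    (fD n).eval (vD n ((n:ℤ)+1))
        / ∏ b ∈ (Finset.Icc (-((n:ℤ)+1)) ((n:ℤ)+1)).erase ((n:ℤ)+1), (vD n ((n:ℤ)+1) - vD n b)
      = qF^(2*n) * ((qF⁻¹)^2 - 1) / ((qF⁻¹ - 0) * (qF⁻¹ - -qF⁻¹)) := by
  rw [vD_top, fD, fpol_eval, pair_prod n hc_top, sIcc_erase_top,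
    Finset.prod_insert (by simp only [Finset.mem_insert, mem_In]; omega),
    Finset.prod_insert (by simp only [mem_In]; omega), vD_bot, vD_zero, conv_qinv]
  exact prod_cancel₂ _ _ _ _ _ (by simpa using qinv_ne_zero)
    (sub_ne_zero.mpr qinv_ne_neg_qinv) (prod_qinv_ne_zero n)

lemma termBot1 (n : ℕ) :
    (fD n).eval (vD n (-((n:ℤ)+1)))
        / ∏ b ∈ (Finset.Icc (-((n:ℤ)+1)) ((n:ℤ)+1)).erase (-((n:ℤ)+1)),
            (vD n (-((n:ℤ)+1)) - vD n b)
      = qF^(2*n) * ((-qF⁻¹)^2 - 1) / ((-qF⁻¹ - 0) * (-qF⁻¹ - qF⁻¹)) := by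
  rw [vD_bot, fD, fpol_eval, pair_prod n hc_bot, sIcc_erase_bot,
    Finset.prod_insert (by simp only [Finset.mem_insert, mem_In]; omega),
    Finset.prod_insert (by simp only [mem_In]; omega), vD_top, vD_zero, conv_neg_qinv]
  exact prod_cancel₂ _ _ _ _ _ (by simpa using qinv_ne_zero)
    (fun h => qinv_ne_neg_qinv (by linear_combination -h)) (prod_neg_qinv_ne_zero n)

lemma prod_zero_LF (n : ℕ) : ∏ b ∈ In n, ((0:FF) - LF b) = 1 := by
  rw [In_prod]
  refine Finset.prod_eq_one fun i _ => ?_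
  rw [LF_neg]
  have := mul_inv_cancel₀ (LF_ne_zero i)
  linear_combination this

lemma term01 (n : ℕ) :
    (fD n).eval (vD n 0) / ∏ b ∈ In (n+1), (vD n 0 - vD n b) = qF^2 := by
  have hq := qF_ne_zero
  rw [vD_zero, fD, fpol_eval]
  have h1 : ∏ b ∈ In n, (qF^2 * 0 - LF b) = 1 := by
    rw [Finset.prod_congr rfl (fun b _ => by rw [mul_zero]), prod_zero_LF]
  have h2 : ∏ b ∈ In (n+1), ((0:FF) - vD n b)
      = (0 - qF⁻¹) * ((0 - -qF⁻¹) * 1) := by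
    rw [In_succ_eq, Finset.prod_insert (by simp only [Finset.mem_insert, mem_In]; omega),
      Finset.prod_insert (by simp only [mem_In]; omega), vD_top, vD_bot,
      Finset.prod_congr rfl (fun b hb => by rw [vD_In hb]), prod_zero_LF]
  rw [h1, h2]
  field_simp
  ring


lemma sum_Icc_cast (n : ℕ) (g : ℤ → FF) :
    ∑ i ∈ Finset.Icc (1:ℤ) (n:ℤ), g i = ∑ i ∈ Finset.Icc (1:ℕ) n, g (i:ℤ) := by
  have hmap : Finset.Icc (1:ℤ) (n:ℤ)
      = (Finset.Icc (1:ℕ) n).map ⟨fun i : ℕ => (i:ℤ), Nat.cast_injective⟩ := by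
    ext a
    simp only [Finset.mem_map, Finset.mem_Icc, Function.Embedding.coeFn_mk]
    constructor
    · intro h
      exact ⟨a.toNat, by omega, by omega⟩
    · rintro ⟨i, hi, rfl⟩
      omega
  rw [hmap, Finset.sum_map]
  rfl

lemma E_eq (n : ℕ) : ∑ b ∈ In n, LF b
    = ∑ i ∈ Finset.Icc (1:ℕ) n, (LF (i:ℤ) + (LF (i:ℤ))⁻¹) := by
  rw [In_sum, Finset.sum_congr rfl (fun i _ => by rw [LF_neg]), sum_Icc_cast]

lemma In_nonempty {n : ℕ} (hn : 1 ≤ n) : (In n).Nonempty :=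
  ⟨1, mem_In.mpr ⟨one_ne_zero, by omega, by omega⟩⟩

lemma fD_coeff_top (n : ℕ) : (fD n).coeff (2*n+2) = (qF^2)^(2*n) := by
  have h := fpol_coeff_top (In n) LF (pow_ne_zero 2 qF_ne_zero)
  rw [card_In] at h
  exact h

lemma fD_coeff_next {n : ℕ} (hn : 1 ≤ n) :
    (fD n).coeff (2*n+1) = -(qF^2)^(2*n-1) * ∑ b ∈ In n, LF b := by
  have h := fpol_coeff_next (In n) LF (pow_ne_zero 2 qF_ne_zero) (In_nonempty hn)
  rw [card_In] at h
  exact h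

lemma fD_degree (n : ℕ) : (fD n).degree = ((2*n+2 : ℕ) : WithBot ℕ) := by
  have h := fpol_degree (In n) LF (pow_ne_zero 2 qF_ne_zero)
  rw [card_In] at h
  exact h

lemma fac_ne_zero (n : ℕ) : qF^2*(qF^2-1)*qF^(2*n-2) ≠ 0 :=
  mul_ne_zero (mul_ne_zero (pow_ne_zero _ qF_ne_zero)
    (sub_ne_zero.mpr qF_sq_ne_one)) (pow_ne_zero _ qF_ne_zero)

lemma In_succ_subset (n : ℕ) : In (n+1) ⊆ Finset.Icc (-((n:ℤ)+1)) ((n:ℤ)+1) := by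
  intro x hx
  rw [sIcc_ok]
  exact Finset.mem_insert_of_mem hx


lemma sum_In_succ_split (n : ℕ) (T : ℤ → FF) :
    ∑ a ∈ In (n+1), T a = T ((n:ℤ)+1) + (T (-((n:ℤ)+1)) + ∑ a ∈ In n, T a) := by
  rw [In_succ_eq n, Finset.sum_insert (by simp only [Finset.mem_insert, mem_In]; omega),
    Finset.sum_insert (by simp only [mem_In]; omega)]

lemma sum_Icc_split (n : ℕ) (T : ℤ → FF) :
    ∑ a ∈ Finset.Icc (-((n:ℤ)+1)) ((n:ℤ)+1), T a
      = T 0 + (T ((n:ℤ)+1) + (T (-((n:ℤ)+1)) + ∑ a ∈ In n, T a)) := by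
  rw [sIcc_ok n, Finset.sum_insert (by simp only [mem_In]; omega), sum_In_succ_split n T]

lemma part2 (n : ℕ) (hn : 4 ≤ n) :
    ∑ a ∈ In n, LF a * Pna n a
      = qF ^ (2 * (n : ℤ) - 2) * ∑ i ∈ Finset.Icc 1 n, (LF (i : ℤ) + (LF (i : ℤ))⁻¹) := by
  have hq := qF_ne_zero
  have hinj2 : Set.InjOn (vD n) (In (n+1) : Set ℤ) :=
    (hInj n).mono (Finset.coe_subset.mpr (In_succ_subset n))
  have hcard2 : (In (n+1)).card = 2*n+2 := by rw [card_In]; omega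
  have hdegle : (fD n).degree ≤ ((In (n+1)).card : WithBot ℕ) := by
    rw [fD_degree, hcard2]
  have key := lagB (In (n+1)) (In_nonempty (by omega)) (vD n) hinj2 (fD n) hdegle
  -- sum of nodes
  have hvsum : ∑ a ∈ In (n+1), vD n a = ∑ b ∈ In n, LF b := by
    rw [In_succ_eq, Finset.sum_insert (by simp only [Finset.mem_insert, mem_In]; omega),
      Finset.sum_insert (by simp only [mem_In]; omega), vD_top, vD_bot,
      Finset.sum_congr rfl (fun b hb => vD_In hb)]
    ring
  -- LHS split
  have hTB : qF^(2*n) * ((qF⁻¹)^2 - 1) / (qF⁻¹ - -qF⁻¹)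
      + qF^(2*n) * ((-qF⁻¹)^2 - 1) / (-qF⁻¹ - qF⁻¹) = 0 := by
    have hc1 : qF⁻¹ - -qF⁻¹ ≠ 0 := sub_ne_zero.mpr qinv_ne_neg_qinv
    have hc2 : -qF⁻¹ - qF⁻¹ ≠ 0 := fun h => qinv_ne_neg_qinv (by linear_combination -h)
    rw [div_add_div _ _ hc1 hc2, div_eq_iff (mul_ne_zero hc1 hc2)]
    ring
  have hsum := sum_In_succ_split n
    (fun a => (fD n).eval (vD n a) / ∏ b ∈ (In (n+1)).erase a, (vD n a - vD n b))
  rw [termTop2 n, termBot2 n, Finset.sum_congr rfl (fun a ha => termA2 n ha),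
    ← Finset.mul_sum] at hsum
  rw [hsum, hvsum] at key
  have hco1 : (In (n+1)).card - 1 = 2*n+1 := by omega
  rw [hco1, hcard2, fD_coeff_next (by omega : 1 ≤ n), fD_coeff_top] at key
  have key2 : qF^2*(qF^2-1)*qF^(2*n-2) * ∑ a ∈ In n, LF a * Pna n a
      = -(qF^2)^(2*n-1) * (∑ b ∈ In n, LF b) + (qF^2)^(2*n) * ∑ b ∈ In n, LF b := by
    linear_combination key - hTB
  have hz : qF ^ (2 * (n : ℤ) - 2) = qF^(2*n-2) := by
    rw [show (2 * (n : ℤ) - 2) = ((2*n-2 : ℕ) : ℤ) by push_cast; omega, zpow_natCast]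
  rw [hz, ← E_eq]
  have p1 : (qF^2)^(2*n-1) = (qF^(2*n-2))^2 * qF^2 := by
    rw [← pow_mul, ← pow_mul, ← pow_add]
    congr 1
    omega
  have p2 : (qF^2)^(2*n) = (qF^(2*n-2))^2 * qF^4 := by
    rw [← pow_mul, ← pow_mul, ← pow_add]
    congr 1
    omega
  refine mul_left_cancel₀ (fac_ne_zero n) ?_
  rw [key2, p1, p2]
  ring


lemma part1 (n : ℕ) (hn : 4 ≤ n) :
    ∑ a ∈ In n, Pna n a
      = ∑ i ∈ Finset.Icc 1 n,
          (qF ^ (2 * ((n : ℤ) - (i : ℤ))) + qF ^ (-(2 * ((n : ℤ) - (i : ℤ))))) := by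
  have hq := qF_ne_zero
  have hcard1 : (Finset.Icc (-((n:ℤ)+1)) ((n:ℤ)+1)).card = 2*n+3 := by
    rw [Int.card_Icc]
    omega
  have hdeglt : (fD n).degree < ((Finset.Icc (-((n:ℤ)+1)) ((n:ℤ)+1)).card : WithBot ℕ) := by
    rw [fD_degree, hcard1]
    exact_mod_cast Nat.lt_succ_self (2*n+2)
  have key := lagA (Finset.Icc (-((n:ℤ)+1)) ((n:ℤ)+1)) (vD n) (hInj n) (fD n) hdeglt
  have hsum := sum_Icc_split n
    (fun a => (fD n).eval (vD n a)
      / ∏ b ∈ (Finset.Icc (-((n:ℤ)+1)) ((n:ℤ)+1)).erase a, (vD n a - vD n b))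
  have h0 : (fD n).eval (vD n 0)
      / ∏ b ∈ (Finset.Icc (-((n:ℤ)+1)) ((n:ℤ)+1)).erase 0, (vD n 0 - vD n b) = qF^2 := by
    rw [sIcc_erase_zero]
    exact term01 n
  rw [h0, termTop1 n, termBot1 n, Finset.sum_congr rfl (fun a ha => termA1 n ha),
    ← Finset.mul_sum] at hsum
  rw [hsum, hcard1, (show 2*n+3-1 = 2*n+2 by omega), fD_coeff_top] at key
  have hTB : qF^(2*n) * ((qF⁻¹)^2-1) / ((qF⁻¹ - 0)*(qF⁻¹ - -qF⁻¹))
      + qF^(2*n) * ((-qF⁻¹)^2-1) / ((-qF⁻¹-0)*(-qF⁻¹-qF⁻¹))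
      = qF^(2*n) - qF^(2*n)*qF^2 := by
    have hc1 : (qF⁻¹ - 0)*(qF⁻¹ - -qF⁻¹) ≠ 0 :=
      mul_ne_zero (by simpa using qinv_ne_zero) (sub_ne_zero.mpr qinv_ne_neg_qinv)
    have hc2 : (-qF⁻¹-0)*(-qF⁻¹-qF⁻¹) ≠ 0 :=
      mul_ne_zero (by simpa using (neg_ne_zero.mpr qinv_ne_zero))
        (fun h => qinv_ne_neg_qinv (by linear_combination -h))
    rw [div_add_div _ _ hc1 hc2, div_eq_iff (mul_ne_zero hc1 hc2)]
    have hqq : qF * qF⁻¹ = 1 := mul_inv_cancel₀ hq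
    field_simp
    ring
  have key2 : qF^2*(qF^2-1)*qF^(2*n-2) * ∑ a ∈ In n, Pna n a
      = (qF^2)^(2*n) - qF^2 - (qF^(2*n) - qF^(2*n)*qF^2) := by
    linear_combination key - hTB
  have hR : qF^2*(qF^2-1)*qF^(2*n-2) * ∑ i ∈ Finset.Icc 1 n,
        (qF ^ (2 * ((n : ℤ) - (i : ℤ))) + qF ^ (-(2 * ((n : ℤ) - (i : ℤ)))))
      = (qF^(4*n) - qF^(2*n)) + (qF^(2*n+2) - qF^2) := by
    rw [Finset.mul_sum]
    have hper : ∀ i ∈ Finset.Icc 1 n,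
        qF^2*(qF^2-1)*qF^(2*n-2) * (qF ^ (2 * ((n : ℤ) - (i : ℤ))) + qF ^ (-(2 * ((n : ℤ) - (i : ℤ)))))
          = (qF^(4*n-2*(i-1)) - qF^(4*n-2*i)) + (qF^(2*(i+1)) - qF^(2*i)) := by
      intro i hi
      rw [Finset.mem_Icc] at hi
      have hz1 : qF ^ (2 * ((n:ℤ) - i)) = qF^(2*(n-i)) := by
        rw [show (2*((n:ℤ)-i)) = ((2*(n-i):ℕ):ℤ) by push_cast; omega, zpow_natCast]
      have hz2 : qF ^ (-(2 * ((n:ℤ) - i))) = (qF^(2*(n-i)))⁻¹ := by rw [zpow_neg, hz1]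
      rw [hz1, hz2]
      have hy : qF^(2*(n-i)) * (qF^(2*(n-i)))⁻¹ = 1 := mul_inv_cancel₀ (pow_ne_zero _ hq)
      have k1 : qF^2 * (qF^(2*n-2) * qF^(2*(n-i))) = qF^(4*n-2*i) := by
        rw [← pow_add, ← pow_add]
        congr 1
        omega
      have k2 : qF^2 * qF^(4*n-2*i) = qF^(4*n-2*(i-1)) := by
        rw [← pow_add]
        congr 1
        omega
      have k3 : qF^(2*n-2) = qF^(2*(i-1)) * qF^(2*(n-i)) := by
        rw [← pow_add]
        congr 1
        omega
      have k4 : qF^2 * qF^(2*(i-1)) = qF^(2*i) := by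
        rw [← pow_add]
        congr 1
        omega
      have k5 : qF^2 * qF^(2*i) = qF^(2*(i+1)) := by
        rw [← pow_add]
        congr 1
        omega
      linear_combination (qF^2-1)*k1 + k2 + ((qF^4-qF^2)*(qF^(2*(n-i)))⁻¹)*k3
        + ((qF^4-qF^2)*qF^(2*(i-1)))*hy + (qF^2-1)*k4 - k5
    rw [Finset.sum_congr rfl hper]
    have hmap : Finset.Icc (1:ℕ) n = (Finset.range n).map ⟨fun j => j+1, add_left_injective 1⟩ := by
      ext a
      simp only [Finset.mem_map, Finset.mem_range, Finset.mem_Icc, Function.Embedding.coeFn_mk]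
      constructor
      · intro h
        exact ⟨a-1, by omega, by omega⟩
      · rintro ⟨j, hj, rfl⟩
        omega
    rw [hmap, Finset.sum_map]
    simp only [Function.Embedding.coeFn_mk, Nat.add_sub_cancel]
    rw [Finset.sum_add_distrib, Finset.sum_range_sub' (fun j => qF^(4*n-2*j)) n,
      Finset.sum_range_sub (fun j => qF^(2*(j+1))) n]
    have e1 : 4*n-2*0 = 4*n := by omega
    have e2 : 4*n-2*n = 2*n := by omega
    have e3 : 2*(n+1) = 2*n+2 := by omega
    have e4 : 2*(0+1) = 2 := by omega
    rw [e1, e2, e3, e4]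
  refine mul_left_cancel₀ (fac_ne_zero n) ?_
  rw [key2, hR]
  have hpowA : (qF^2)^(2*n) = qF^(4*n) := by
    rw [← pow_mul]
    congr 1
    omega
  have hpowB : qF^(2*n) * qF^2 = qF^(2*n+2) := by rw [← pow_add]
  linear_combination hpowA + hpowB

/-- Type `D_n` evaluations of `G_{n,0}` and `G_{n,1}`. -/
theorem typeD_G0_G1 (n : ℕ) (hn : 4 ≤ n) :
    (∑ a ∈ In n, Pna n a
      = ∑ i ∈ Finset.Icc 1 n,
          (qF ^ (2 * ((n : ℤ) - (i : ℤ))) + qF ^ (-(2 * ((n : ℤ) - (i : ℤ))))))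
    ∧
    (∑ a ∈ In n, LF a * Pna n a
      = qF ^ (2 * (n : ℤ) - 2) * ∑ i ∈ Finset.Icc 1 n, (LF (i : ℤ) + (LF (i : ℤ))⁻¹)) := by
  exact ⟨part1 n hn, part2 n hn⟩
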